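/- For every integer n ≥ 1 and every smooth compactly supported function φ on ℝ² ∖ {0}, setting φ̃(u,v) = φ(u cos v, u sin v), the second-variation integral of the dihedral Enneper surface in the coordinates (u,v) reduces to the conformal planar form: ∫₀^{2π} ∫₀^∞ ( u·(∂_uφ̃)² + u^{−1}·(∂_vφ̃)² − (8n²·u^{2n−1}/(1+u^{2n})²)·φ̃² ) du dv = ∫_{ℝ²} ( ‖∇φ(w)‖² − (8n²‖w‖^{2n−2}/(1+‖w‖^{2n})²)·φ(w)² ) dA(w), and the left-hand side equals ∫∫ (Σ_{i,j} g^{ij} ∂_iφ̃ ∂_jφ̃ + 2κφ̃²)√(EG−F²) du dv for the first fundamental form E = (1/4)(1+u^{2n})², F = 0, G = u²E and Gaussian curvature κ = −16n²u^{2n−2}/(1+u^{2n})⁴ of σⁿ. -/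

import Mathlib

noncomputable section
open MeasureTheory Real

/-- The plane `ℝ²` as a Euclidean space. -/
abbrev E2 : Type := EuclideanSpace ℝ (Fin 2)

/-- The point of `ℝ²` with Cartesian coordinates `(x, y)`. -/
def toE2 (x y : ℝ) : E2 := (WithLp.equiv 2 (Fin 2 → ℝ)).symm ![x, y]

/-- Partial derivative in the first (`u`) variable. -/
def pdU (f : ℝ × ℝ → ℝ) (p : ℝ × ℝ) : ℝ := deriv (fun x => f (x, p.2)) p.1

/-- Partial derivative in the second (`v`) variable. -/
def pdV (f : ℝ × ℝ → ℝ) (p : ℝ × ℝ) : ℝ := deriv (fun y => f (p.1, y)) p.2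

/-- The expression of `φ : ℝ² → ℝ` in polar coordinates: `φ̃(u,v) = φ(u cos v, u sin v)`. -/
def polarLift (φ : E2 → ℝ) (p : ℝ × ℝ) : ℝ :=
  φ (toE2 (p.1 * Real.cos p.2) (p.1 * Real.sin p.2))

/-! ### Auxiliary lemmas -/

lemma toE2_smul (c x y : ℝ) : toE2 (c*x) (c*y) = c • toE2 x y := by
  ext i; fin_cases i <;> simp [toE2]

lemma toE2_decomp (x y : ℝ) : toE2 x y = x • toE2 1 0 + y • toE2 0 1 := by
  ext i; fin_cases i <;> simp [toE2]

lemma norm_toE2 (x y : ℝ) : ‖toE2 x y‖ = Real.sqrt (x^2+y^2) := by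
  rw [EuclideanSpace.norm_eq]; simp [toE2, Fin.sum_univ_two, sq]

lemma norm_toE2_polar (u v : ℝ) : ‖toE2 (u * Real.cos v) (u * Real.sin v)‖ = |u| := by
  rw [norm_toE2]
  have h := Real.sin_sq_add_cos_sq v
  rw [show (u * Real.cos v)^2 + (u * Real.sin v)^2 = u^2 by nlinarith]
  exact Real.sqrt_sq_eq_abs u

lemma inner_toE2 (g : E2) (a b : ℝ) : @inner ℝ _ _ g (toE2 a b) = g 0 * a + g 1 * b := by
  simp [toE2, PiLp.inner_apply, Fin.sum_univ_two, RCLike.inner_apply, mul_comm]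

lemma norm_sq_E2 (g : E2) : ‖g‖^2 = g 0 ^2 + g 1 ^2 := by
  rw [← real_inner_self_eq_norm_sq]
  rw [PiLp.inner_apply]; simp [Fin.sum_univ_two, RCLike.inner_apply, sq]

lemma cont_toE2 : Continuous fun q : ℝ × ℝ => toE2 q.1 q.2 := by
  rw [show (fun q : ℝ × ℝ => toE2 q.1 q.2) = fun q : ℝ × ℝ => q.1 • toE2 1 0 + q.2 • toE2 0 1 from
    funext fun q => toE2_decomp _ _]
  fun_prop

lemma fderiv_eq_inner (φ : E2 → ℝ) (hφ : ContDiff ℝ (⊤ : ℕ∞) φ) (w ξ : E2) :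
    fderiv ℝ φ w ξ = @inner ℝ _ _ (gradient φ w) ξ := by
  have h := ((hφ.differentiable (by simp)) w).hasGradientAt
  rw [hasGradientAt_iff_hasFDerivAt] at h
  rw [h.fderiv]
  simp [InnerProductSpace.toDual_apply_apply]

lemma pdU_eq (φ : E2 → ℝ) (hφ : ContDiff ℝ (⊤ : ℕ∞) φ) (u v : ℝ) :
    pdU (polarLift φ) (u, v)
      = @inner ℝ _ _ (gradient φ (toE2 (u * Real.cos v) (u * Real.sin v)))
          (toE2 (Real.cos v) (Real.sin v)) := by
  have hd : HasDerivAt (fun x : ℝ => toE2 (x * Real.cos v) (x * Real.sin v))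
      (toE2 (Real.cos v) (Real.sin v)) u := by
    simp only [toE2_smul]
    simpa using (hasDerivAt_id u).smul_const (toE2 (Real.cos v) (Real.sin v))
  have hc : HasDerivAt (fun x : ℝ => φ (toE2 (x * Real.cos v) (x * Real.sin v)))
      ((fderiv ℝ φ (toE2 (u * Real.cos v) (u * Real.sin v))) (toE2 (Real.cos v) (Real.sin v))) u :=
    (((hφ.differentiable (by simp)) _).hasFDerivAt).comp_hasDerivAt u hd
  rw [pdU]
  simp only [polarLift]
  rw [hc.deriv, fderiv_eq_inner φ hφ]

lemma pdV_eq (φ : E2 → ℝ) (hφ : ContDiff ℝ (⊤ : ℕ∞) φ) (u v : ℝ) :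
    pdV (polarLift φ) (u, v)
      = @inner ℝ _ _ (gradient φ (toE2 (u * Real.cos v) (u * Real.sin v)))
          (toE2 (-(u * Real.sin v)) (u * Real.cos v)) := by
  have h1 : HasDerivAt (fun y : ℝ => u * Real.cos y) (-(u * Real.sin v)) v := by
    simpa [mul_comm] using (Real.hasDerivAt_cos v).const_mul u
  have h2 : HasDerivAt (fun y : ℝ => u * Real.sin y) (u * Real.cos v) v :=
    (Real.hasDerivAt_sin v).const_mul u
  have hd0 := (h1.smul_const (toE2 1 0)).add (h2.smul_const (toE2 0 1))
  have hd : HasDerivAt (fun y : ℝ => toE2 (u * Real.cos y) (u * Real.sin y))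
      (toE2 (-(u * Real.sin v)) (u * Real.cos v)) v := by
    rw [show (fun y : ℝ => toE2 (u * Real.cos y) (u * Real.sin y))
        = fun y : ℝ => (u * Real.cos y) • toE2 1 0 + (u * Real.sin y) • toE2 0 1 from
        funext fun y => toE2_decomp _ _, toE2_decomp (-(u * Real.sin v)) (u * Real.cos v)]
    exact hd0
  have hc : HasDerivAt (fun y : ℝ => φ (toE2 (u * Real.cos y) (u * Real.sin y)))
      ((fderiv ℝ φ (toE2 (u * Real.cos v) (u * Real.sin v)))
        (toE2 (-(u * Real.sin v)) (u * Real.cos v))) v :=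
    (((hφ.differentiable (by simp)) _).hasFDerivAt).comp_hasDerivAt v hd
  rw [pdV]
  simp only [polarLift]
  rw [hc.deriv, fderiv_eq_inner φ hφ]

/-- The planar integrand. -/
def gfun (n : ℕ) (φ : E2 → ℝ) (w : E2) : ℝ :=
  ‖gradient φ w‖ ^ 2 - (8 * (n : ℝ) ^ 2 * ‖w‖ ^ (2 * n - 2) / (1 + ‖w‖ ^ (2 * n)) ^ 2) * φ w ^ 2

/-- The polar integrand. -/
def hfun (n : ℕ) (φ : E2 → ℝ) (p : ℝ × ℝ) : ℝ :=
  p.1 * gfun n φ (toE2 (p.1 * Real.cos p.2) (p.1 * Real.sin p.2))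

lemma gradient_zero_of_nmem (φ : E2 → ℝ) (w : E2) (hw : w ∉ tsupport φ) : gradient φ w = 0 := by
  rw [gradient, fderiv_of_notMem_tsupport _ hw, map_zero]

lemma gfun_zero_of_nmem (n : ℕ) (φ : E2 → ℝ) (w : E2) (hw : w ∉ tsupport φ) : gfun n φ w = 0 := by
  rw [gfun, gradient_zero_of_nmem φ w hw, image_eq_zero_of_notMem_tsupport hw]
  simp

lemma gradient_cont (φ : E2 → ℝ) (hφ : ContDiff ℝ (⊤ : ℕ∞) φ) : Continuous (gradient φ) := by
  have : gradient φ = fun x => (InnerProductSpace.toDual ℝ E2).symm (fderiv ℝ φ x) := rfl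
  rw [this]
  exact (LinearIsometryEquiv.continuous _).comp (hφ.continuous_fderiv (by simp))

lemma gfun_cont (n : ℕ) (φ : E2 → ℝ) (hφ : ContDiff ℝ (⊤ : ℕ∞) φ) : Continuous (gfun n φ) := by
  apply Continuous.sub
  · exact ((gradient_cont φ hφ).norm).pow 2
  · apply Continuous.mul _ ((hφ.continuous).pow 2)
    apply Continuous.div (by fun_prop) (by fun_prop)
    intro w
    have : (0:ℝ) < 1 + ‖w‖ ^ (2*n) := by positivity
    exact ne_of_gt (by positivity)

lemma hfun_cont (n : ℕ) (φ : E2 → ℝ) (hφ : ContDiff ℝ (⊤ : ℕ∞) φ) : Continuous (hfun n φ) := by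
  apply continuous_fst.mul
  apply (gfun_cont n φ hφ).comp
  have hc : Continuous fun p : ℝ × ℝ => (p.1 * Real.cos p.2, p.1 * Real.sin p.2) := by fun_prop
  exact cont_toE2.comp hc

lemma exists_bounds (φ : E2 → ℝ) (hφc : HasCompactSupport φ)
    (hφ0 : tsupport φ ⊆ {w : E2 | w ≠ 0}) :
    ∃ ε R : ℝ, 0 < ε ∧ ∀ w : E2, (‖w‖ < ε ∨ R < ‖w‖) → w ∉ tsupport φ := by
  obtain ⟨R, hR⟩ := hφc.isBounded.subset_closedBall 0
  have h0 : (0:E2) ∉ tsupport φ := fun h => (hφ0 h) rfl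
  have : (tsupport φ)ᶜ ∈ nhds (0:E2) := (isClosed_tsupport φ).isOpen_compl.mem_nhds h0
  obtain ⟨ε, hε, hball⟩ := Metric.mem_nhds_iff.mp this
  refine ⟨ε, R, hε, fun w hw hmem => ?_⟩
  rcases hw with h | h
  · exact hball (by simpa [Metric.mem_ball, dist_zero_right] using h) hmem
  · have := hR hmem
    simp only [Metric.mem_closedBall, dist_zero_right] at this
    linarith

lemma hfun_vanish (n : ℕ) (φ : E2 → ℝ) {ε R : ℝ}
    (hsupp : ∀ w : E2, (‖w‖ < ε ∨ R < ‖w‖) → w ∉ tsupport φ)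
    (p : ℝ × ℝ) (hp1 : 0 < p.1) (hp : p.1 < ε ∨ R < p.1) : hfun n φ p = 0 := by
  have : ‖toE2 (p.1 * Real.cos p.2) (p.1 * Real.sin p.2)‖ = p.1 := by
    rw [norm_toE2_polar, abs_of_pos hp1]
  have hnm := hsupp _ (by rw [this]; exact hp)
  rw [hfun, gfun_zero_of_nmem n φ _ hnm, mul_zero]

lemma hfun_integrableOn (n : ℕ) (φ : E2 → ℝ) (hφ : ContDiff ℝ (⊤ : ℕ∞) φ)
    (hφc : HasCompactSupport φ) (hφ0 : tsupport φ ⊆ {w : E2 | w ≠ 0}) (a b : ℝ) :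
    IntegrableOn (hfun n φ) (Set.Ioi (0:ℝ) ×ˢ Set.Ioo a b) := by
  obtain ⟨ε, R, hε, hsupp⟩ := exists_bounds φ hφc hφ0
  set s : Set (ℝ × ℝ) := Set.Ioi (0:ℝ) ×ˢ Set.Ioo a b with hs
  set K : Set (ℝ × ℝ) := Set.Icc ε R ×ˢ Set.Icc a b with hK
  have hKc : IsCompact K := isCompact_Icc.prod isCompact_Icc
  have h1 : IntegrableOn (hfun n φ) K := ((hfun_cont n φ hφ).continuousOn).integrableOn_compact hKc
  have hmeas : MeasurableSet (s \ K) :=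
    ((measurableSet_Ioi.prod measurableSet_Ioo).diff (measurableSet_Icc.prod measurableSet_Icc))
  have h2 : IntegrableOn (hfun n φ) (s \ K) := by
    have heq : Set.EqOn (hfun n φ) 0 (s \ K) := by
      intro p hp
      obtain ⟨⟨hp1, hp2⟩, hpK⟩ := hp
      have hp2' : p.2 ∈ Set.Icc a b := Set.mem_Icc_of_Ioo hp2
      have : p.1 ∉ Set.Icc ε R := by
        intro h
        exact hpK ⟨h, hp2'⟩
      rw [Set.mem_Icc, not_and_or, not_le, not_le] at this
      exact hfun_vanish n φ hsupp p hp1 this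
    rw [integrableOn_congr_fun heq hmeas]
    exact integrableOn_zero
  have : s ⊆ K ∪ (s \ K) := by
    intro p hp
    by_cases h : p ∈ K
    · exact Or.inl h
    · exact Or.inr ⟨hp, h⟩
  exact (h1.union h2).mono_set this

/-- The measurable equivalence `E2 ≃ᵐ ℝ × ℝ`. -/
def E2equiv : E2 ≃ᵐ ℝ × ℝ :=
  (MeasurableEquiv.toLp 2 (Fin 2 → ℝ)).symm.trans (MeasurableEquiv.finTwoArrow)

lemma E2equiv_mp : MeasurePreserving E2equiv := by
  have h1 := EuclideanSpace.volume_preserving_symm_measurableEquiv_toLp (Fin 2)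
  have h2 := MeasureTheory.volume_preserving_finTwoArrow ℝ
  simpa [E2equiv, MeasurableEquiv.coe_trans] using h2.comp h1

lemma integral_E2_eq (g : E2 → ℝ) : (∫ w : E2, g w) = ∫ p : ℝ × ℝ, g (toE2 p.1 p.2) := by
  rw [← (E2equiv_mp.symm E2equiv).integral_comp E2equiv.symm.measurableEmbedding g]
  rfl

lemma polar_step (g : E2 → ℝ) :
    (∫ p in Set.Ioi (0:ℝ) ×ˢ Set.Ioo (-π) π,
        p.1 * g (toE2 (p.1 * Real.cos p.2) (p.1 * Real.sin p.2)))
      = ∫ w : E2, g w := by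
  rw [integral_E2_eq]
  rw [← integral_comp_polarCoord_symm (fun q : ℝ × ℝ => g (toE2 q.1 q.2))]
  rfl

lemma hfun_periodic (n : ℕ) (φ : E2 → ℝ) (u : ℝ) :
    Function.Periodic (fun v => hfun n φ (u, v)) (2*π) := by
  intro v
  simp [hfun, Real.cos_add_two_pi, Real.sin_add_two_pi]

lemma periodic_shift (f : ℝ → ℝ) (hper : Function.Periodic f (2*π)) :
    (∫ v in Set.Ioo (0:ℝ) (2*π), f v) = ∫ v in Set.Ioo (-π) π, f v := by
  have hpi := Real.pi_pos
  have h1 : (∫ v in Set.Ioo (0:ℝ) (2*π), f v) = ∫ v in (0:ℝ)..(2*π), f v := by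
    rw [intervalIntegral.integral_of_le (by linarith), integral_Ioc_eq_integral_Ioo]
  have h2 : (∫ v in Set.Ioo (-π) π, f v) = ∫ v in (-π)..π, f v := by
    rw [intervalIntegral.integral_of_le (by linarith), integral_Ioc_eq_integral_Ioo]
  rw [h1, h2]
  have := hper.intervalIntegral_add_eq 0 (-π)
  simpa [show (0:ℝ) + 2*π = 2*π by ring, show -π + 2*π = π by ring] using this

lemma hfun_chain (n : ℕ) (φ : E2 → ℝ) (hφ : ContDiff ℝ (⊤ : ℕ∞) φ)
    (hφc : HasCompactSupport φ) (hφ0 : tsupport φ ⊆ {w : E2 | w ≠ 0}) :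
    (∫ v in Set.Ioo (0:ℝ) (2*π), ∫ u in Set.Ioi (0:ℝ), hfun n φ (u, v))
      = ∫ w : E2, gfun n φ w := by
  have hI1 : IntegrableOn (hfun n φ) (Set.Ioi (0:ℝ) ×ˢ Set.Ioo (-π) π) :=
    hfun_integrableOn n φ hφ hφc hφ0 _ _
  have hI2 : IntegrableOn (hfun n φ) (Set.Ioi (0:ℝ) ×ˢ Set.Ioo (0:ℝ) (2*π)) :=
    hfun_integrableOn n φ hφ hφc hφ0 _ _
  have swap : (∫ v in Set.Ioo (0:ℝ) (2*π), ∫ u in Set.Ioi (0:ℝ), hfun n φ (u, v))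
      = ∫ u in Set.Ioi (0:ℝ), ∫ v in Set.Ioo (0:ℝ) (2*π), hfun n φ (u, v) := by
    have h : Integrable (Function.uncurry fun u v => hfun n φ (u, v))
        ((volume.restrict (Set.Ioi (0:ℝ))).prod (volume.restrict (Set.Ioo (0:ℝ) (2*π)))) := by
      rw [Measure.prod_restrict]
      have : Function.uncurry (fun u v => hfun n φ (u, v)) = hfun n φ := by
        funext p; rfl
      rw [this]
      exact hI2
    exact (integral_integral_swap h).symm
  rw [swap]
  have hper : ∀ u : ℝ, (∫ v in Set.Ioo (0:ℝ) (2*π), hfun n φ (u, v))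
      = ∫ v in Set.Ioo (-π) π, hfun n φ (u, v) := fun u =>
    periodic_shift _ (hfun_periodic n φ u)
  rw [integral_congr_ae (ae_of_all _ fun u => hper u)]
  have prodint : (∫ p in Set.Ioi (0:ℝ) ×ˢ Set.Ioo (-π) π, hfun n φ p)
      = ∫ u in Set.Ioi (0:ℝ), ∫ v in Set.Ioo (-π) π, hfun n φ (u, v) := by
    exact setIntegral_prod _ hI1
  rw [← prodint]
  exact polar_step (gfun n φ)

lemma pointwise1 (n : ℕ) (hn : 1 ≤ n) (φ : E2 → ℝ) (hφ : ContDiff ℝ (⊤ : ℕ∞) φ)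
    (u v : ℝ) (hu : 0 < u) :
    u * pdU (polarLift φ) (u, v) ^ 2 + u⁻¹ * pdV (polarLift φ) (u, v) ^ 2
      - (8 * (n : ℝ) ^ 2 * u ^ (2 * n - 1) / (1 + u ^ (2 * n)) ^ 2) * polarLift φ (u, v) ^ 2
    = hfun n φ (u, v) := by
  rw [pdU_eq φ hφ, pdV_eq φ hφ, inner_toE2, inner_toE2]
  set w : E2 := toE2 (u * Real.cos v) (u * Real.sin v) with hw
  have hPL : polarLift φ (u, v) = φ w := rfl
  rw [hPL]
  rw [hfun]
  show _ = u * gfun n φ w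
  rw [gfun, norm_sq_E2, norm_toE2_polar, abs_of_pos hu]
  set g0 := gradient φ w 0
  set g1 := gradient φ w 1
  set P := φ w
  have hs := Real.sin_sq_add_cos_sq v
  have hupow : u ^ (2*n-1) = u ^ (2*n-2) * u := by rw [← pow_succ]; congr 1; omega
  have hu' : u ≠ 0 := ne_of_gt hu
  have hC : u⁻¹ * (g0 * (-(u * Real.sin v)) + g1 * (u * Real.cos v)) ^ 2
      = u * (g1 * Real.cos v - g0 * Real.sin v)^2 := by field_simp; ring
  have hA : (g0 * Real.cos v + g1 * Real.sin v)^2 + (g1 * Real.cos v - g0 * Real.sin v)^2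
      = g0^2 + g1^2 := by linear_combination (g0^2+g1^2)*hs
  rw [hC, hupow]
  linear_combination (u : ℝ) * hA

lemma pointwise2 (n : ℕ) (hn : 1 ≤ n) (u A B P : ℝ) (hu : 0 < u) :
    u * A ^ 2 + u⁻¹ * B ^ 2 - (8 * (n:ℝ)^2 * u ^ (2*n-1) / (1 + u ^ (2*n)) ^ 2) * P ^ 2
    = (((1/4) * (1 + u ^ (2*n)) ^ 2)⁻¹ * A ^ 2
        + (u^2 * ((1/4) * (1 + u ^ (2*n)) ^ 2))⁻¹ * B ^ 2
        + 2 * (-16 * (n:ℝ)^2 * u ^ (2*n-2) / (1 + u ^ (2*n)) ^ 4) * P ^ 2)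
      * Real.sqrt ((1/4) * (1 + u ^ (2*n)) ^ 2 * (u^2 * ((1/4) * (1 + u ^ (2*n)) ^ 2)) - 0 ^ 2) := by
  have hupow : u ^ (2*n-1) = u ^ (2*n-2) * u := by rw [← pow_succ]; congr 1; omega
  have hD : (0:ℝ) < (1 + u ^ (2*n)) := by positivity
  rw [show (1/4) * (1 + u ^ (2*n)) ^ 2 * (u^2 * ((1/4) * (1 + u ^ (2*n)) ^ 2)) - 0 ^ 2
      = (u * ((1/4) * (1 + u ^ (2*n)) ^ 2)) ^ 2 by ring,
    Real.sqrt_sq (by positivity)]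
  rw [hupow]
  field_simp
  ring

/-- for `n ≥ 1` and any smooth compactly supported `φ` on `ℝ² ∖ {0}`, the
second-variation integral of the dihedral Enneper surface in the coordinates `(u,v)`
equals the conformal planar form `∫ (‖∇φ‖² − (8n²‖w‖^{2n−2}/(1+‖w‖^{2n})²)φ²) dA`, and it
equals `∫∫ (Σ gⁱʲ ∂ᵢφ̃ ∂ⱼφ̃ + 2κφ̃²)√(EG−F²) du dv` for the first fundamental form
`E = (1/4)(1+u^{2n})²`, `F = 0`, `G = u²E` and Gaussian curvature
`κ = −16n²u^{2n−2}/(1+u^{2n})⁴` of `σⁿ`. -/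
theorem enneper_secondVariation_polar_reduction (n : ℕ) (hn : 1 ≤ n)
    (φ : E2 → ℝ) (hφ : ContDiff ℝ (⊤ : ℕ∞) φ) (hφc : HasCompactSupport φ)
    (hφ0 : tsupport φ ⊆ {w : E2 | w ≠ 0}) :
    (∫ v in Set.Ioo (0 : ℝ) (2 * π), ∫ u in Set.Ioi (0 : ℝ),
        (u * pdU (polarLift φ) (u, v) ^ 2 + u⁻¹ * pdV (polarLift φ) (u, v) ^ 2
          - (8 * (n : ℝ) ^ 2 * u ^ (2 * n - 1) / (1 + u ^ (2 * n)) ^ 2)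
            * polarLift φ (u, v) ^ 2))
      = (∫ w : E2,
          (‖gradient φ w‖ ^ 2 -
            (8 * (n : ℝ) ^ 2 * ‖w‖ ^ (2 * n - 2) / (1 + ‖w‖ ^ (2 * n)) ^ 2) * φ w ^ 2)) ∧
    (∫ v in Set.Ioo (0 : ℝ) (2 * π), ∫ u in Set.Ioi (0 : ℝ),
        (u * pdU (polarLift φ) (u, v) ^ 2 + u⁻¹ * pdV (polarLift φ) (u, v) ^ 2
          - (8 * (n : ℝ) ^ 2 * u ^ (2 * n - 1) / (1 + u ^ (2 * n)) ^ 2)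
            * polarLift φ (u, v) ^ 2))
      = (∫ v in Set.Ioo (0 : ℝ) (2 * π), ∫ u in Set.Ioi (0 : ℝ),
          (((1 / 4) * (1 + u ^ (2 * n)) ^ 2)⁻¹ * pdU (polarLift φ) (u, v) ^ 2
            + (u ^ 2 * ((1 / 4) * (1 + u ^ (2 * n)) ^ 2))⁻¹ * pdV (polarLift φ) (u, v) ^ 2
            + 2 * (-16 * (n : ℝ) ^ 2 * u ^ (2 * n - 2) / (1 + u ^ (2 * n)) ^ 4)
              * polarLift φ (u, v) ^ 2)
            * Real.sqrt ((1 / 4) * (1 + u ^ (2 * n)) ^ 2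
                * (u ^ 2 * ((1 / 4) * (1 + u ^ (2 * n)) ^ 2)) - 0 ^ 2)) := by
  constructor
  · calc (∫ v in Set.Ioo (0 : ℝ) (2 * π), ∫ u in Set.Ioi (0 : ℝ),
        (u * pdU (polarLift φ) (u, v) ^ 2 + u⁻¹ * pdV (polarLift φ) (u, v) ^ 2
          - (8 * (n : ℝ) ^ 2 * u ^ (2 * n - 1) / (1 + u ^ (2 * n)) ^ 2)
            * polarLift φ (u, v) ^ 2))
        = ∫ v in Set.Ioo (0:ℝ) (2*π), ∫ u in Set.Ioi (0:ℝ), hfun n φ (u, v) := by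
          apply integral_congr_ae (ae_of_all _ fun v => ?_)
          apply setIntegral_congr_fun measurableSet_Ioi
          intro u hu
          exact pointwise1 n hn φ hφ u v hu
      _ = ∫ w : E2, gfun n φ w := hfun_chain n φ hφ hφc hφ0
      _ = _ := rfl
  · apply integral_congr_ae (ae_of_all _ fun v => ?_)
    apply setIntegral_congr_fun measurableSet_Ioi
    intro u hu
    exact pointwise2 n hn u _ _ _ hu
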